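/- arXiv:1704.01816 — 5 statements merged into one kernel-verified Lean document; each statement's English description precedes it below -/
import Mathlib

section
/- Let Ω ⊆ ℝ³ be a non-empty open set, Grad₀ the closure of the symmetrized gradient on compactly supported smooth vector fields, Div₀ the closure of the row-wise divergence on compactly supported smooth symmetric-matrix-valued fields, Grad := -(Div₀)* and Div := -(Grad₀)*. Then the orthogonal complement of D(Grad₀) in the Hilbert space D(Grad) (with graph inner product) is N(1 - Div Grad) = {u ∈ D(Grad) : Grad u ∈ D(Div) and Div Grad u = u}, and the orthogonal complement of D(Div₀) in D(Div) is N(1 - Grad Div). -/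
namespace LinearPMap

variable {𝕜 E F : Type*} [RCLike 𝕜]
  [NormedAddCommGroup E] [InnerProductSpace 𝕜 E] [CompleteSpace E]
  [NormedAddCommGroup F] [InnerProductSpace 𝕜 F]
  {T : E →ₗ.[𝕜] F}

theorem exists_adjoint_apply_eq_iff (hT : Dense (T.domain : Set E)) (y : F) (w : E) :
    (∃ h : y ∈ T†.domain, T† ⟨y, h⟩ = w) ↔ ∀ x : T.domain, inner 𝕜 w (x : E) = inner 𝕜 y (T x) := by
  constructor
  · rintro ⟨hy, rfl⟩
    exact adjoint_isFormalAdjoint hT ⟨y, hy⟩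
  · intro hw
    exact ⟨mem_adjoint_domain_of_exists y ⟨w, hw⟩, adjoint_apply_eq hT _ hw⟩

/-- The left side says that `u` is orthogonal to `D(T)` in the graph inner product of `A`;
since `A` agrees with `T` on `D(T)`, this is the defining identity of `T† (A u) = -u`. -/
theorem forall_inner_add_inner_eq_zero_iff (hT : Dense (T.domain : Set E)) {A : E →ₗ.[𝕜] F}
    (hTA : T ≤ A) (u : A.domain) :
    (∀ v : T.domain, inner 𝕜 (u : E) (v : E) + inner 𝕜 (A u) (A ⟨v, hTA.1 v.2⟩) = 0)
      ↔ ∃ h : A u ∈ (-T†).domain, (-T†) ⟨A u, h⟩ = (u : E) := by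
  have hAT : ∀ v : T.domain, A ⟨v, hTA.1 v.2⟩ = T v := fun v => (hTA.2 rfl).symm
  have hneg : (∃ h : A u ∈ (-T†).domain, (-T†) ⟨A u, h⟩ = (u : E)) ↔
      ∃ h : A u ∈ T†.domain, T† ⟨A u, h⟩ = -(u : E) := by
    simp only [neg_domain, neg_apply, neg_eq_iff_eq_neg]
  rw [hneg, exists_adjoint_apply_eq_iff hT]
  refine forall_congr' fun v => ?_
  rw [hAT, inner_neg_left, neg_eq_iff_add_eq_zero, eq_comm]

end LinearPMap

theorem stmt1_general {H K : Type*}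
    [NormedAddCommGroup H] [InnerProductSpace ℂ H] [CompleteSpace H]
    [NormedAddCommGroup K] [InnerProductSpace ℂ K] [CompleteSpace K]
    (G₀ : H →ₗ.[ℂ] K)                       -- Grad₀
    (D₀ : K →ₗ.[ℂ] H)                       -- Div₀
    (hGdense : Dense (G₀.domain : Set H)) (hDdense : Dense (D₀.domain : Set K))
    (hG_le : G₀ ≤ -D₀.adjoint)               -- Grad = -(Div₀)* extends Grad₀
    (hD_le : D₀ ≤ -G₀.adjoint)               -- Div = -(Grad₀)* extends Div₀
    :
    -- orthogonal complement of D(Grad₀) in D(Grad) is N(1 - Div Grad):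
    (∀ u : (-D₀.adjoint).domain,
      (∀ v : G₀.domain,
          (inner ℂ (u : H) (v : H) : ℂ)
            + inner ℂ ((-D₀.adjoint) u) ((-D₀.adjoint) ⟨(v : H), hG_le.1 v.2⟩) = 0)
        ↔ ∃ h : (-D₀.adjoint) u ∈ (-G₀.adjoint).domain,
            (-G₀.adjoint) ⟨(-D₀.adjoint) u, h⟩ = (u : H)) ∧
    -- orthogonal complement of D(Div₀) in D(Div) is N(1 - Grad Div):
    (∀ T : (-G₀.adjoint).domain,
      (∀ S : D₀.domain,
          (inner ℂ (T : K) (S : K) : ℂ)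
            + inner ℂ ((-G₀.adjoint) T) ((-G₀.adjoint) ⟨(S : K), hD_le.1 S.2⟩) = 0)
        ↔ ∃ h : (-G₀.adjoint) T ∈ (-D₀.adjoint).domain,
            (-D₀.adjoint) ⟨(-G₀.adjoint) T, h⟩ = (T : K)) :=
  ⟨LinearPMap.forall_inner_add_inner_eq_zero_iff hGdense hG_le,
    LinearPMap.forall_inner_add_inner_eq_zero_iff hDdense hD_le⟩

/-- With `G₀ = Grad₀` (closure of the symmetrized gradient on compactly
supported smooth vector fields, `H = L²(Ω)³`, `K = sym[L²(Ω)^{3×3}]`),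
`D₀ = Div₀` (closure of the row-wise divergence), `Grad := -(Div₀)*` and
`Div := -(Grad₀)*`: the orthogonal complement of `D(Grad₀)` in the Hilbert space
`D(Grad)` with graph inner product is
`N(1 - Div Grad) = {u ∈ D(Grad) : Grad u ∈ D(Div) ∧ Div Grad u = u}`, and the
orthogonal complement of `D(Div₀)` in `D(Div)` is `N(1 - Grad Div)`. -/
theorem stmt1 {H K : Type*}
    [NormedAddCommGroup H] [InnerProductSpace ℂ H] [CompleteSpace H]
    [NormedAddCommGroup K] [InnerProductSpace ℂ K] [CompleteSpace K]
    (G₀ : H →ₗ.[ℂ] K)                       -- Grad₀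
    (D₀ : K →ₗ.[ℂ] H)                       -- Div₀
    (hGdense : Dense (G₀.domain : Set H)) (hDdense : Dense (D₀.domain : Set K))
    (hGclosed : G₀.IsClosed) (hDclosed : D₀.IsClosed)
    (hG_le : G₀ ≤ -D₀.adjoint)               -- Grad = -(Div₀)* extends Grad₀
    (hD_le : D₀ ≤ -G₀.adjoint)               -- Div = -(Grad₀)* extends Div₀
    :
    -- orthogonal complement of D(Grad₀) in D(Grad) is N(1 - Div Grad):
    (∀ u : (-D₀.adjoint).domain,
      (∀ v : G₀.domain,
          (inner ℂ (u : H) (v : H) : ℂ)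
            + inner ℂ ((-D₀.adjoint) u) ((-D₀.adjoint) ⟨(v : H), hG_le.1 v.2⟩) = 0)
        ↔ ∃ h : (-D₀.adjoint) u ∈ (-G₀.adjoint).domain,
            (-G₀.adjoint) ⟨(-D₀.adjoint) u, h⟩ = (u : H)) ∧
    -- orthogonal complement of D(Div₀) in D(Div) is N(1 - Grad Div):
    (∀ T : (-G₀.adjoint).domain,
      (∀ S : D₀.domain,
          (inner ℂ (T : K) (S : K) : ℂ)
            + inner ℂ ((-G₀.adjoint) T) ((-G₀.adjoint) ⟨(S : K), hD_le.1 S.2⟩) = 0)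
        ↔ ∃ h : (-G₀.adjoint) T ∈ (-D₀.adjoint).domain,
            (-D₀.adjoint) ⟨(-G₀.adjoint) T, h⟩ = (T : K)) :=
  stmt1_general G₀ D₀ hGdense hDdense hG_le hD_le
end

section
/- Let ι_curl : N(1 + curl curl) → D(curl) be the isometric inclusion of the boundary data space into D(curl) (graph inner products), and define curl• := ι_curl* ∘ curl ∘ ι_curl as an operator on N(1 + curl curl). Then curl• is skew-selfadjoint: for all φ, ψ ∈ N(1 + curl curl), ⟨curl• φ | ψ⟩ = -⟨φ | curl• ψ⟩, where the inner product is the graph inner product of curl. -/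
theorem stmt2_general {H : Type*} [NormedAddCommGroup H] [InnerProductSpace ℂ H]
    (curl : H →ₗ.[ℂ] H)
    (φ ψ : curl.domain)
    (hφ : curl φ ∈ curl.domain) (hψ : curl ψ ∈ curl.domain)
    (hφN : curl ⟨curl φ, hφ⟩ = -(φ : H))    -- φ ∈ N(1 + curl curl)
    (hψN : curl ⟨curl ψ, hψ⟩ = -(ψ : H))    -- ψ ∈ N(1 + curl curl)
    :
    (inner ℂ (curl φ) ((ψ : H)) : ℂ) + inner ℂ (curl ⟨curl φ, hφ⟩) (curl ψ)
      = -((inner ℂ ((φ : H)) (curl ψ) : ℂ) + inner ℂ (curl φ) (curl ⟨curl ψ, hψ⟩)) := by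
  rw [hφN, hψN, inner_neg_left, inner_neg_right]
  ring

/-- On the boundary data space `N(1 + curl curl)` (elements `φ` of the domain
of the maximal `curl` with `curl φ` in the domain and `curl curl φ = -φ`), equipped with
the graph inner product of `curl`, the operator `curl• = ι_curl* ∘ curl ∘ ι_curl` (which on
such elements is given by `φ ↦ curl φ`, since `curl φ ∈ N(1 + curl curl)` again) is
skew-selfadjoint: `⟨curl• φ | ψ⟩ = -⟨φ | curl• ψ⟩` in the graph inner product
`⟨a|b⟩ + ⟨curl a|curl b⟩`. -/
theorem stmt2 {H : Type*} [NormedAddCommGroup H] [InnerProductSpace ℂ H] [CompleteSpace H]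
    (curl : H →ₗ.[ℂ] H)
    (φ ψ : curl.domain)
    (hφ : curl φ ∈ curl.domain) (hψ : curl ψ ∈ curl.domain)
    (hφN : curl ⟨curl φ, hφ⟩ = -(φ : H))    -- φ ∈ N(1 + curl curl)
    (hψN : curl ⟨curl ψ, hψ⟩ = -(ψ : H))    -- ψ ∈ N(1 + curl curl)
    :
    (inner ℂ (curl φ) ((ψ : H)) : ℂ) + inner ℂ (curl ⟨curl φ, hφ⟩) (curl ψ)
      = -((inner ℂ ((φ : H)) (curl ψ) : ℂ) + inner ℂ (curl φ) (curl ⟨curl ψ, hψ⟩)) :=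
  stmt2_general curl φ ψ hφ hψ hφN hψN
end

section
/- For Ω ⊆ ℝ³ non-empty open, let curl be the maximal curl and Φ, E ∈ D(curl) with ι ι* the orthogonal projector of D(curl) (graph inner product) onto N(1 + curl curl). Then ⟨curl Φ | E⟩_{L²} - ⟨Φ | curl E⟩_{L²} = ⟨curl (ιι*Φ) | ιι*E⟩_{L²} - ⟨ιι*Φ | curl (ιι*E)⟩_{L²}; i.e., the 'integration by parts boundary term' depends only on the boundary-data projections ι*Φ and ι*E. -/
/- The boundary form `β(Φ, E) = ⟨curl Φ | E⟩ - ⟨Φ | curl E⟩` is sesquilinear on `D(curl)` and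
vanishes as soon as one argument lies in `D(curl₀)`. A sesquilinear form with this property
only sees its arguments modulo `D(curl₀)`, and `Φ ≡ π Φ`, `E ≡ π E` modulo `D(curl₀)`. -/

theorem LinearMap.map₂_eq_of_sub_mem {R S R₃ : Type*} [Semiring R] [Semiring S] [CommSemiring R₃]
    {σ₁ : R →+* R₃} {σ₂ : S →+* R₃} {M N P : Type*} [AddCommGroup M] [AddCommGroup N]
    [AddCommGroup P] [Module R M] [Module S N] [Module R₃ P] (B : M →ₛₗ[σ₁] N →ₛₗ[σ₂] P)
    {K : Submodule R M} {L : Submodule S N} (hK : ∀ x ∈ K, ∀ y, B x y = 0)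
    (hL : ∀ x, ∀ y ∈ L, B x y = 0) {x x' : M} {y y' : N} (hx : x - x' ∈ K) (hy : y - y' ∈ L) :
    B x y = B x' y' := by
  have hsplit : B x y - B x' y' = B (x - x') y + B x' (y - y') := by
    simp only [_root_.map_sub, LinearMap.sub_apply]
    abel
  rw [← sub_eq_zero, hsplit, hK _ hx, hL _ _ hy, add_zero]

namespace LinearPMap

variable {H : Type*} [NormedAddCommGroup H] [InnerProductSpace ℂ H]

noncomputable def boundaryForm (T : H →ₗ.[ℂ] H) : T.domain →ₗ⋆[ℂ] T.domain →ₗ[ℂ] ℂ :=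
  LinearMap.mk₂'ₛₗ (starRingEnd ℂ) (RingHom.id ℂ)
    (fun x y => inner ℂ (T x) (y : H) - inner ℂ (x : H) (T y))
    (fun x x' y => by
      simp only [LinearPMap.map_add, Submodule.coe_add, inner_add_left]
      ring)
    (fun c x y => by
      simp only [LinearPMap.map_smul, Submodule.coe_smul, inner_smul_left, smul_eq_mul]
      ring)
    (fun x y y' => by
      simp only [LinearPMap.map_add, Submodule.coe_add, inner_add_right]
      ring)
    (fun c x y => by
      simp only [LinearPMap.map_smul, Submodule.coe_smul, inner_smul_right, smul_eq_mul,
        RingHom.id_apply]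
      ring)

theorem boundaryForm_apply (T : H →ₗ.[ℂ] H) (x y : T.domain) :
    T.boundaryForm x y = inner ℂ (T x) (y : H) - inner ℂ (x : H) (T y) :=
  rfl

end LinearPMap

theorem stmt13_general {H : Type*} [NormedAddCommGroup H] [InnerProductSpace ℂ H]
    (curl : H →ₗ.[ℂ] H)
    (D₀ : Submodule ℂ H)   -- D₀ = D(curl₀)
    (hsym : ∀ φ ψ : curl.domain, ((φ : H) ∈ D₀ ∨ (ψ : H) ∈ D₀) →
      (inner ℂ (curl φ) ((ψ : H)) : ℂ) = inner ℂ ((φ : H)) (curl ψ))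
    (π : curl.domain →ₗ[ℂ] curl.domain)
    (hπ : ∀ Φ : curl.domain, ((Φ - π Φ : curl.domain) : H) ∈ D₀)
    (Φ E : curl.domain) :
    (inner ℂ (curl Φ) ((E : H)) : ℂ) - inner ℂ ((Φ : H)) (curl E)
      = (inner ℂ (curl (π Φ)) (((π E : curl.domain) : H)) : ℂ)
        - inner ℂ (((π Φ : curl.domain) : H)) (curl (π E)) := by
  let D₀' : Submodule ℂ curl.domain := D₀.comap curl.domain.subtype
  have hvanish : ∀ φ ψ : curl.domain, (φ ∈ D₀' ∨ ψ ∈ D₀') → curl.boundaryForm φ ψ = 0 :=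
    fun φ ψ h => by rw [LinearPMap.boundaryForm_apply, hsym φ ψ h, sub_self]
  simpa only [LinearPMap.boundaryForm_apply] using
    curl.boundaryForm.map₂_eq_of_sub_mem (K := D₀') (L := D₀')
      (fun φ hφ ψ => hvanish φ ψ (Or.inl hφ)) (fun φ ψ hψ => hvanish φ ψ (Or.inr hψ))
      (hπ Φ) (hπ E)

/-- For the maximal operator `curl` (adjoint of the minimal `curl₀`, whose
domain is `D₀`), the integration-by-parts boundary term
`⟨curl Φ | E⟩ - ⟨Φ | curl E⟩` depends only on the projections of `Φ`, `E` onto the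
boundary data space `N(1 + curl curl)`: if `π` is the orthogonal projector of `D(curl)`
(graph inner product) onto `N(1 + curl curl)` (so that `Φ - π Φ ∈ D(curl₀)` for all `Φ`,
and `⟨curl φ | ψ⟩ = ⟨φ | curl ψ⟩` whenever `φ ∈ D(curl₀)` or `ψ ∈ D(curl₀)`), then
`⟨curl Φ | E⟩ - ⟨Φ | curl E⟩ = ⟨curl (π Φ) | π E⟩ - ⟨π Φ | curl (π E)⟩`. -/
theorem stmt13 {H : Type*} [NormedAddCommGroup H] [InnerProductSpace ℂ H] [CompleteSpace H]
    (curl : H →ₗ.[ℂ] H)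
    (D₀ : Submodule ℂ H) (hD₀ : D₀ ≤ curl.domain)   -- D₀ = D(curl₀)
    (hsym : ∀ φ ψ : curl.domain, ((φ : H) ∈ D₀ ∨ (ψ : H) ∈ D₀) →
      (inner ℂ (curl φ) ((ψ : H)) : ℂ) = inner ℂ ((φ : H)) (curl ψ))
    (π : curl.domain →ₗ[ℂ] curl.domain)
    (hπ : ∀ Φ : curl.domain, ((Φ - π Φ : curl.domain) : H) ∈ D₀)
    (Φ E : curl.domain) :
    (inner ℂ (curl Φ) ((E : H)) : ℂ) - inner ℂ ((Φ : H)) (curl E)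
      = (inner ℂ (curl (π Φ)) (((π E : curl.domain) : H)) : ℂ)
        - inner ℂ (((π Φ : curl.domain) : H)) (curl (π E)) :=
  stmt13_general curl D₀ hsym π hπ Φ E
end

section
/- For Ω ⊆ ℝ³ non-empty open and Φ ∈ D(Grad), T ∈ D(Div): ⟨Grad Φ | T⟩_{L²} + ⟨Φ | Div T⟩_{L²} = ⟨Grad(π_G Φ) | π_D T⟩_{L²} + ⟨π_G Φ | Div(π_D T)⟩_{L²}, where π_G = ι_Grad ι_Grad* is the orthogonal projector of D(Grad) onto N(1 - Div Grad) and π_D = ι_Div ι_Div* is the orthogonal projector of D(Div) onto N(1 - Grad Div). -/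
open LinearPMap

section BoundaryPairing

variable {𝕜 H K : Type*} [RCLike 𝕜]
  [NormedAddCommGroup H] [InnerProductSpace 𝕜 H] [NormedAddCommGroup K] [InnerProductSpace 𝕜 K]
  (A : H →ₗ.[𝕜] K) (B : K →ₗ.[𝕜] H)

def boundaryPairing (φ : A.domain) (T : B.domain) : 𝕜 :=
  inner 𝕜 (A φ) (T : K) + inner 𝕜 (φ : H) (B T)

variable {A B}

theorem boundaryPairing_sub_left (φ ψ : A.domain) (T : B.domain) :
    boundaryPairing A B (φ - ψ) T = boundaryPairing A B φ T - boundaryPairing A B ψ T := by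
  simp only [boundaryPairing, LinearPMap.map_sub, Submodule.coe_sub, inner_sub_left]
  ring

theorem boundaryPairing_sub_right (φ : A.domain) (T S : B.domain) :
    boundaryPairing A B φ (T - S) = boundaryPairing A B φ T - boundaryPairing A B φ S := by
  simp only [boundaryPairing, LinearPMap.map_sub, Submodule.coe_sub, inner_sub_right]
  ring

theorem boundaryPairing_congr_left {φ ψ : A.domain} {T : B.domain}
    (h : boundaryPairing A B (φ - ψ) T = 0) :
    boundaryPairing A B φ T = boundaryPairing A B ψ T :=
  sub_eq_zero.mp (boundaryPairing_sub_left φ ψ T ▸ h)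

theorem boundaryPairing_congr_right {φ : A.domain} {T S : B.domain}
    (h : boundaryPairing A B φ (T - S) = 0) :
    boundaryPairing A B φ T = boundaryPairing A B φ S :=
  sub_eq_zero.mp (boundaryPairing_sub_right φ T S ▸ h)

end BoundaryPairing

theorem stmt14_general {H K : Type*}
    [NormedAddCommGroup H] [InnerProductSpace ℂ H]
    [NormedAddCommGroup K] [InnerProductSpace ℂ K]
    (Grad : H →ₗ.[ℂ] K) (Div : K →ₗ.[ℂ] H)
    (DG₀ : Submodule ℂ H)   -- D(Grad₀)
    (DD₀ : Submodule ℂ K)    -- D(Div₀)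
    (hibp : ∀ (φ : Grad.domain) (T : Div.domain), ((φ : H) ∈ DG₀ ∨ (T : K) ∈ DD₀) →
      (inner ℂ (Grad φ) ((T : K)) : ℂ) + inner ℂ ((φ : H)) (Div T) = 0)
    (πG : Grad.domain →ₗ[ℂ] Grad.domain)
    (hπG : ∀ Φ : Grad.domain, ((Φ - πG Φ : Grad.domain) : H) ∈ DG₀)
    (πD : Div.domain →ₗ[ℂ] Div.domain)
    (hπD : ∀ T : Div.domain, ((T - πD T : Div.domain) : K) ∈ DD₀)
    (Φ : Grad.domain) (T : Div.domain) :
    (inner ℂ (Grad Φ) ((T : K)) : ℂ) + inner ℂ ((Φ : H)) (Div T)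
      = (inner ℂ (Grad (πG Φ)) (((πD T : Div.domain) : K)) : ℂ)
        + inner ℂ (((πG Φ : Grad.domain) : H)) (Div (πD T)) := by
  have hΦ : boundaryPairing Grad Div Φ T = boundaryPairing Grad Div (πG Φ) T :=
    boundaryPairing_congr_left (hibp _ _ (Or.inl (hπG Φ)))
  have hT : boundaryPairing Grad Div (πG Φ) T = boundaryPairing Grad Div (πG Φ) (πD T) :=
    boundaryPairing_congr_right (hibp _ _ (Or.inr (hπD T)))
  exact hΦ.trans hT

/-- For `Φ ∈ D(Grad)` and `T ∈ D(Div)`, the integration-by-parts boundary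
term `⟨Grad Φ | T⟩ + ⟨Φ | Div T⟩` depends only on the boundary-data projections:
if `πG` is the orthogonal projector of `D(Grad)` (graph inner product) onto
`N(1 - Div Grad)` (so `Φ - πG Φ ∈ D(Grad₀)`) and `πD` the orthogonal projector of
`D(Div)` onto `N(1 - Grad Div)` (so `T - πD T ∈ D(Div₀)`), and
`⟨Grad φ | T⟩ + ⟨φ | Div T⟩ = 0` whenever `φ ∈ D(Grad₀)` or `T ∈ D(Div₀)`, then
`⟨Grad Φ | T⟩ + ⟨Φ | Div T⟩ = ⟨Grad (πG Φ) | πD T⟩ + ⟨πG Φ | Div (πD T)⟩`. -/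
theorem stmt14 {H K : Type*}
    [NormedAddCommGroup H] [InnerProductSpace ℂ H] [CompleteSpace H]
    [NormedAddCommGroup K] [InnerProductSpace ℂ K] [CompleteSpace K]
    (Grad : H →ₗ.[ℂ] K) (Div : K →ₗ.[ℂ] H)
    (DG₀ : Submodule ℂ H) (hDG₀ : DG₀ ≤ Grad.domain)   -- D(Grad₀)
    (DD₀ : Submodule ℂ K) (hDD₀ : DD₀ ≤ Div.domain)    -- D(Div₀)
    (hibp : ∀ (φ : Grad.domain) (T : Div.domain), ((φ : H) ∈ DG₀ ∨ (T : K) ∈ DD₀) →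
      (inner ℂ (Grad φ) ((T : K)) : ℂ) + inner ℂ ((φ : H)) (Div T) = 0)
    (πG : Grad.domain →ₗ[ℂ] Grad.domain)
    (hπG : ∀ Φ : Grad.domain, ((Φ - πG Φ : Grad.domain) : H) ∈ DG₀)
    (πD : Div.domain →ₗ[ℂ] Div.domain)
    (hπD : ∀ T : Div.domain, ((T - πD T : Div.domain) : K) ∈ DD₀)
    (Φ : Grad.domain) (T : Div.domain) :
    (inner ℂ (Grad Φ) ((T : K)) : ℂ) + inner ℂ ((Φ : H)) (Div T)
      = (inner ℂ (Grad (πG Φ)) (((πD T : Div.domain) : K)) : ℂ)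
        + inner ℂ (((πG Φ : Grad.domain) : H)) (Div (πD T)) :=
  stmt14_general Grad Div DG₀ DD₀ hibp πG hπG πD hπD Φ T
end

section
/- Let M₀ be selfadjoint and bounded on a Hilbert space H such that M₀ is strictly positive definite on its range R(M₀) (i.e. ⟨x|M₀x⟩ ≥ c‖x‖² for x ∈ R(M₀)‾) and M₁ bounded with Re M₁ strictly positive definite on the null space N(M₀) (i.e. ⟨x|Re M₁ x⟩ ≥ c‖x‖² for x ∈ N(M₀)). Then there exist ν₀, c₀ > 0 such that ν M₀ + Re M₁ ≥ c₀ for all ν ≥ ν₀. -/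
/-!
Split `x = u + v` with `u ∈ N(M₀)` and `v ∈ N(M₀)ᗮ = closure R(M₀)` (as `M₀` is selfadjoint).
Then `⟪x, M₀ x⟫ = ⟪v, M₀ v⟫ ≥ c‖v‖²`, while `Re ⟪x, M₁ x⟫ ≥ c‖u‖² - 2‖M₁‖‖u‖‖v‖ - ‖M₁‖‖v‖²`.
Absorbing the cross term by `2‖M₁‖‖u‖‖v‖ ≤ (c/2)‖u‖² + (2‖M₁‖²/c)‖v‖²`, a large multiple of
`c‖v‖²` controls everything not already bounded below by `(c/2)‖u‖²`.
-/

section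

open RCLike

variable {𝕜 E : Type*} [RCLike 𝕜] [NormedAddCommGroup E] [InnerProductSpace 𝕜 E]

theorem LinearMap.IsSymmetric.inner_add_apply_add_of_apply_eq_zero {T : E →ₗ[𝕜] E}
    (hT : T.IsSymmetric) {u : E} (hu : T u = 0) (v : E) :
    inner 𝕜 (u + v) (T (u + v)) = inner 𝕜 v (T v) := by
  have huv : inner 𝕜 u (T v) = 0 := by rw [← hT u v, hu, inner_zero_left]
  simp [inner_add_left, hu, huv]

theorem ContinuousLinearMap.neg_opNorm_mul_le_re_inner_apply (T : E →L[𝕜] E) (a b : E) :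
    -(‖T‖ * ‖a‖ * ‖b‖) ≤ re (inner 𝕜 a (T b)) := by
  have h := (abs_re_le_norm (inner 𝕜 a (T b))).trans
    ((norm_inner_le_norm a (T b)).trans (mul_le_mul_of_nonneg_left (T.le_opNorm b) (norm_nonneg a)))
  linarith [neg_abs_le (re (inner 𝕜 a (T b)))]

theorem ContinuousLinearMap.re_inner_add_apply_add_ge (T : E →L[𝕜] E) {c : ℝ} {u : E}
    (hu : c * ‖u‖ ^ 2 ≤ re (inner 𝕜 u (T u))) (v : E) :
    c * ‖u‖ ^ 2 - 2 * ‖T‖ * ‖u‖ * ‖v‖ - ‖T‖ * ‖v‖ ^ 2 ≤ re (inner 𝕜 (u + v) (T (u + v))) := by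
  have huv := T.neg_opNorm_mul_le_re_inner_apply u v
  have hvu := T.neg_opNorm_mul_le_re_inner_apply v u
  have hvv := T.neg_opNorm_mul_le_re_inner_apply v v
  simp only [map_add, inner_add_left, inner_add_right]
  nlinarith

end

theorem two_mul_mul_le_add_div {c : ℝ} (hc : 0 < c) (K a b : ℝ) :
    2 * K * a * b ≤ c / 2 * a ^ 2 + 2 * K ^ 2 / c * b ^ 2 := by
  have h : c / 2 * a ^ 2 + 2 * K ^ 2 / c * b ^ 2 - 2 * K * a * b =
      (c * a - 2 * K * b) ^ 2 / (2 * c) := by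
    field_simp
    ring
  linarith [div_nonneg (sq_nonneg (c * a - 2 * K * b)) (by positivity : (0 : ℝ) ≤ 2 * c)]

theorem div_two_mul_sq_add_sq_le_mul_add_sub_sub {c K ν a b : ℝ} (hc : 0 < c)
    (hν : (c + K + 2 * K ^ 2 / c) / c ≤ ν) :
    c / 2 * (a ^ 2 + b ^ 2) ≤ ν * (c * b ^ 2) + (c * a ^ 2 - 2 * K * a * b - K * b ^ 2) := by
  have hνc : c + K + 2 * K ^ 2 / c ≤ ν * c := (div_le_iff₀ hc).mp hν
  nlinarith [two_mul_mul_le_add_div hc K a b, mul_le_mul_of_nonneg_right hνc (sq_nonneg b),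
    sq_nonneg b]

theorem stmt16_general {H : Type*} [NormedAddCommGroup H] [InnerProductSpace ℂ H] [CompleteSpace H]
    (M₀ M₁ : H →L[ℂ] H) (hsa : IsSelfAdjoint M₀)
    {c : ℝ} (hc : 0 < c)
    (hrange : ∀ x ∈ (LinearMap.range (M₀ : H →ₗ[ℂ] H)).topologicalClosure,
      c * ‖x‖ ^ 2 ≤ (inner ℂ x (M₀ x) : ℂ).re)
    (hker : ∀ x ∈ LinearMap.ker (M₀ : H →ₗ[ℂ] H),
      c * ‖x‖ ^ 2 ≤ (inner ℂ x (M₁ x) : ℂ).re) :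
    ∃ ν₀ > (0 : ℝ), ∃ c₀ > (0 : ℝ), ∀ ν ≥ ν₀, ∀ x : H,
      c₀ * ‖x‖ ^ 2 ≤ ν * (inner ℂ x (M₀ x) : ℂ).re + (inner ℂ x (M₁ x) : ℂ).re := by
  set K := LinearMap.ker (M₀ : H →ₗ[ℂ] H)
  have hK : Kᗮ = (LinearMap.range (M₀ : H →ₗ[ℂ] H)).topologicalClosure := by
    simpa [hsa.adjoint_eq] using M₀.orthogonal_ker
  have : CompleteSpace K := M₀.isClosed_ker.completeSpace_coe
  refine ⟨(c + ‖M₁‖ + 2 * ‖M₁‖ ^ 2 / c) / c, by positivity, c / 2, by positivity, ?_⟩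
  intro ν hν x
  obtain ⟨u, hu, v, hv, rfl⟩ := K.exists_add_mem_mem_orthogonal x
  have hM₀ : c * ‖v‖ ^ 2 ≤ (inner ℂ (u + v) (M₀ (u + v))).re := by
    rw [← ContinuousLinearMap.coe_coe, hsa.isSymmetric.inner_add_apply_add_of_apply_eq_zero hu]
    exact hrange v (hK ▸ hv)
  have hM₁ := M₁.re_inner_add_apply_add_ge (hker u hu) v
  have hν₀ : 0 ≤ ν := le_trans (by positivity) hν
  rw [norm_add_sq (𝕜 := ℂ), hv u hu, map_zero, mul_zero, add_zero]
  calc c / 2 * (‖u‖ ^ 2 + ‖v‖ ^ 2)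
      ≤ ν * (c * ‖v‖ ^ 2) + (c * ‖u‖ ^ 2 - 2 * ‖M₁‖ * ‖u‖ * ‖v‖ - ‖M₁‖ * ‖v‖ ^ 2) :=
        div_two_mul_sq_add_sq_le_mul_add_sub_sub hc hν
    _ ≤ _ := by gcongr; exact hM₁

/-- If `M₀` is bounded, selfadjoint, non-negative and strictly positive
definite on (the closure of) its range, and `Re M₁` is strictly positive definite on the
null space of `M₀`, then there exist `ν₀, c₀ > 0` such that
`ν M₀ + Re M₁ ≥ c₀` for all `ν ≥ ν₀`. -/
theorem stmt16 {H : Type*} [NormedAddCommGroup H] [InnerProductSpace ℂ H] [CompleteSpace H]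
    (M₀ M₁ : H →L[ℂ] H) (hsa : IsSelfAdjoint M₀)
    (hnn : ∀ x : H, 0 ≤ (inner ℂ x (M₀ x) : ℂ).re)
    {c : ℝ} (hc : 0 < c)
    (hrange : ∀ x ∈ (LinearMap.range (M₀ : H →ₗ[ℂ] H)).topologicalClosure,
      c * ‖x‖ ^ 2 ≤ (inner ℂ x (M₀ x) : ℂ).re)
    (hker : ∀ x ∈ LinearMap.ker (M₀ : H →ₗ[ℂ] H),
      c * ‖x‖ ^ 2 ≤ (inner ℂ x (M₁ x) : ℂ).re) :
    ∃ ν₀ > (0 : ℝ), ∃ c₀ > (0 : ℝ), ∀ ν ≥ ν₀, ∀ x : H,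
      c₀ * ‖x‖ ^ 2 ≤ ν * (inner ℂ x (M₀ x) : ℂ).re + (inner ℂ x (M₁ x) : ℂ).re :=
  stmt16_general M₀ M₁ hsa hc hrange hker
end
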